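/- For a simple eigenvalue λ of a matrix M ∈ ℂ^{n×n} with unit right and left eigenvectors x and y, and any matrix E with the same sparsity structure as M satisfying ‖E‖_F = 1, one has |y^H E x| / |y^H x| ≤ ‖(y x^H)|_S‖_F / |y^H x|, where (·)|_S denotes entrywise projection onto the sparsity pattern S of M; moreover the bound is attained for E = (y x^H)|_S / ‖(y x^H)|_S‖_F (assuming (y x^H)|_S ≠ 0). -/

import Mathlib

/-!
Writing the Frobenius inner product as `⟪A, B⟫ = ∑ i j, conj (A i j) * B i j`, one has
`yᴴ E x = ⟪y xᴴ, E⟫`, and when `E` vanishes off the pattern of `M` this equals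
`⟪(y xᴴ)|_S, E⟫`. Cauchy–Schwarz gives the bound, with equality at `E = (y xᴴ)|_S / ‖(y xᴴ)|_S‖_F`.
-/

open Matrix

/-- Frobenius norm of a complex matrix. -/
noncomputable def frob {n : ℕ} (M : Matrix (Fin n) (Fin n) ℂ) : ℝ :=
  Real.sqrt (∑ i, ∑ j, ‖M i j‖ ^ 2)

/-- Entrywise projection of `N` onto the sparsity pattern of `M`. -/
noncomputable def projPat {n : ℕ} (M N : Matrix (Fin n) (Fin n) ℂ) : Matrix (Fin n) (Fin n) ℂ :=
  Matrix.of fun i j => if M i j ≠ 0 then N i j else 0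

section Flatten

variable {m n 𝕜 : Type*} [RCLike 𝕜]

def Matrix.flatten (A : Matrix m n 𝕜) : EuclideanSpace 𝕜 (m × n) :=
  WithLp.toLp 2 fun p => A p.1 p.2

theorem Matrix.flatten_real_smul (r : ℝ) (A : Matrix m n 𝕜) :
    (r • A).flatten = (r : 𝕜) • A.flatten := by
  ext p
  simp [flatten, RCLike.real_smul_eq_coe_mul]

variable [Fintype m] [Fintype n]

theorem Matrix.inner_flatten (A B : Matrix m n 𝕜) :
    inner 𝕜 A.flatten B.flatten = ∑ i, ∑ j, star (A i j) * B i j := by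
  simp [flatten, PiLp.inner_apply, Fintype.sum_prod_type, mul_comm]

theorem Matrix.star_dotProduct_mulVec_eq_inner_flatten (E : Matrix m n 𝕜) (x : n → 𝕜) (y : m → 𝕜) :
    star y ⬝ᵥ E *ᵥ x = inner 𝕜 (of fun i j => y i * star (x j)).flatten E.flatten := by
  simp only [inner_flatten, dotProduct, mulVec, Finset.mul_sum, of_apply, Pi.star_apply,
    star_mul', star_star]
  exact Finset.sum_congr rfl fun i _ => Finset.sum_congr rfl fun j _ => by ring

end Flatten

theorem frob_eq_norm_flatten {n : ℕ} (A : Matrix (Fin n) (Fin n) ℂ) : frob A = ‖A.flatten‖ := by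
  simp [frob, flatten, EuclideanSpace.norm_eq, Fintype.sum_prod_type]

theorem inner_flatten_projPat {n : ℕ} {M E : Matrix (Fin n) (Fin n) ℂ}
    (hE : ∀ i j, M i j = 0 → E i j = 0) (N : Matrix (Fin n) (Fin n) ℂ) :
    inner ℂ (projPat M N).flatten E.flatten = inner ℂ N.flatten E.flatten := by
  simp only [inner_flatten, projPat, of_apply]
  refine Finset.sum_congr rfl fun i _ => Finset.sum_congr rfl fun j _ => ?_
  by_cases h : M i j = 0 <;> simp [h, hE]

theorem norm_inner_smul_inv_norm_self {𝕜 E : Type*} [RCLike 𝕜] [NormedAddCommGroup E]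
    [InnerProductSpace 𝕜 E] (a : E) : ‖inner 𝕜 a (((‖a‖⁻¹ : ℝ) : 𝕜) • a)‖ = ‖a‖ := by
  rw [inner_smul_right, inner_self_eq_norm_sq_to_K, ← RCLike.ofReal_pow, ← RCLike.ofReal_mul,
    RCLike.norm_ofReal, sq, ← mul_assoc, inv_mul_mul_self, abs_norm]

section Perturbation

variable {n : ℕ} (M : Matrix (Fin n) (Fin n) ℂ) (x y : Fin n → ℂ)

theorem norm_star_dotProduct_mulVec_le_frob_projPat {E : Matrix (Fin n) (Fin n) ℂ}
    (hE : ∀ i j, M i j = 0 → E i j = 0) :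
    ‖star y ⬝ᵥ E *ᵥ x‖ ≤ frob (projPat M (of fun i j => y i * star (x j))) * frob E := by
  rw [star_dotProduct_mulVec_eq_inner_flatten, ← inner_flatten_projPat hE, frob_eq_norm_flatten,
    frob_eq_norm_flatten]
  exact norm_inner_le_norm _ _

theorem norm_star_dotProduct_mulVec_normalized_projPat :
    ‖star y ⬝ᵥ ((frob (projPat M (of fun i j => y i * star (x j))))⁻¹ •
      projPat M (of fun i j => y i * star (x j))) *ᵥ x‖ =
      frob (projPat M (of fun i j => y i * star (x j))) := by
  have hsupp : ∀ i j, M i j = 0 → ((frob (projPat M (of fun i j => y i * star (x j))))⁻¹ •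
      projPat M (of fun i j => y i * star (x j))) i j = 0 := fun i j h => by simp [projPat, h]
  rw [star_dotProduct_mulVec_eq_inner_flatten, ← inner_flatten_projPat hsupp, flatten_real_smul,
    frob_eq_norm_flatten, norm_inner_smul_inv_norm_self]

end Perturbation

theorem stmt1_general {n : ℕ} (M E : Matrix (Fin n) (Fin n) ℂ) (x y : Fin n → ℂ)
    (hE : ∀ i j, M i j = 0 → E i j = 0) (hEF : frob E = 1) :
    ‖star y ⬝ᵥ E.mulVec x‖ / ‖star y ⬝ᵥ x‖ ≤
      frob (projPat M (Matrix.of fun i j => y i * star (x j))) / ‖star y ⬝ᵥ x‖ ∧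
    (projPat M (Matrix.of fun i j => y i * star (x j)) ≠ 0 →
      ‖star y ⬝ᵥ
          (((frob (projPat M (Matrix.of fun i j => y i * star (x j))))⁻¹ •
            projPat M (Matrix.of fun i j => y i * star (x j))).mulVec x)‖ /
          ‖star y ⬝ᵥ x‖ =
        frob (projPat M (Matrix.of fun i j => y i * star (x j))) / ‖star y ⬝ᵥ x‖) := by
  refine ⟨?_, fun _ => by rw [norm_star_dotProduct_mulVec_normalized_projPat]⟩
  gcongr
  simpa [hEF] using norm_star_dotProduct_mulVec_le_frob_projPat M x y hE

/-- Structured eigenvalue perturbation bound: for any `E` with the sparsity pattern of `M`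
and `‖E‖_F = 1`, `|yᴴEx|/|yᴴx| ≤ ‖(yxᴴ)|_S‖_F/|yᴴx|`, with equality attained at
`E = (yxᴴ)|_S / ‖(yxᴴ)|_S‖_F`. -/
theorem stmt1 {n : ℕ} (M E : Matrix (Fin n) (Fin n) ℂ) (lam : ℂ) (x y : Fin n → ℂ)
    (hsimple : (Matrix.charpoly M).rootMultiplicity lam = 1)
    (hx : M.mulVec x = lam • x) (hxunit : ∑ i, ‖x i‖ ^ 2 = 1)
    (hy : Mᴴ.mulVec y = (starRingEnd ℂ) lam • y) (hyunit : ∑ i, ‖y i‖ ^ 2 = 1)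
    (hyx : star y ⬝ᵥ x ≠ 0)
    (hE : ∀ i j, M i j = 0 → E i j = 0) (hEF : frob E = 1) :
    ‖star y ⬝ᵥ E.mulVec x‖ / ‖star y ⬝ᵥ x‖ ≤
      frob (projPat M (Matrix.of fun i j => y i * star (x j))) / ‖star y ⬝ᵥ x‖ ∧
    (projPat M (Matrix.of fun i j => y i * star (x j)) ≠ 0 →
      ‖star y ⬝ᵥ
          (((frob (projPat M (Matrix.of fun i j => y i * star (x j))))⁻¹ •
            projPat M (Matrix.of fun i j => y i * star (x j))).mulVec x)‖ /
          ‖star y ⬝ᵥ x‖ =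
        frob (projPat M (Matrix.of fun i j => y i * star (x j))) / ‖star y ⬝ᵥ x‖) :=
  stmt1_general M E x y hE hEF
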